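/- arXiv:2305.01950 — 2 statements merged into one kernel-verified Lean document; each statement's English description precedes it below -/
import Mathlib

section
/- For a field k of characteristic p ≥ 5 and s ∈ k with s ≠ 0, 1 and α ∈ k, define ℓi₂^(p)([s + αt]) := (α^p/(s^p(1-s)^p))·£₁(s) where £₁(s) = ∑_{1≤i≤p-1} s^i/i. Then ℓi₂^(p) = ℓ^(p) ∘ δ in the following sense: for any lift s̃ = s + αt + βt² + ⋯ ∈ k[t]/(t^p) of s + αt with s̃(0) = s, one has ℓ^(p)((1 − s̃) ∧ s̃) = (α^p/(s^p(1-s)^p))·£₁(s), where ℓ^(p) = (1/2)∑_{1≤i<p} i·ℓ_{p-i}∧ℓ_i on Λ²(k[t]/(t^p))^×. In particular the value is independent of the choice of lift beyond the t¹-coefficient. -/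
/-!
Write `s̃ = s + σ` with `σ(0) = 0`. Both normalised logarithms are then power series in `σ`
without constant term, `log(s̃/s) = ∑ (-1)^(n+1) σⁿ/(n sⁿ)` and
`log((1 - s̃)/(1 - s)) = -∑ σⁿ/(n (1-s)ⁿ)`. Since `i ≡ -(p - i)` mod `p`, the antisymmetrised
pairing `ℓ^(p)(u ∧ v)` is the `t^(p-1)`-coefficient of `log u · (log v)'`. In that product a
term `σ^(N-1) σ'` contributes to `t^(p-1)` only when `N = p`, and then `α^p`: for `N < p` it is
`(σ^N)'/N`, whose `t^(p-1)`-coefficient is `p · (…) = 0`, and for `N > p` it has order `≥ p`.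
What is left is `∑ (-1)^(m+1)/m · s^m (1-s)^(p-m)`, which is `£₁(s)` because
`(-1)^(m+1)/m ≡ C(p,m)/p` mod `p`: both sums are then `(1 - s^p - (1-s)^p)/p`.
-/

open Finset PowerSeries

variable (p : ℕ) {k : Type*} [Field k]

/-- Truncated logarithm `log(1+z) = ∑_{1 ≤ n < p} (-1)^{n+1} z^n / n`. -/
noncomputable def tlog (z : PowerSeries k) : PowerSeries k :=
  ∑ n ∈ Finset.Ico 1 p, ((-1 : k) ^ (n + 1) * (n : k)⁻¹) • z ^ n

/-- `ℓ_i(u)`: the `t^i`-coefficient of `log(u/u(0))`. -/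
noncomputable def ell (i : ℕ) (u : PowerSeries k) : k :=
  PowerSeries.coeff (R := k) i
    (tlog p (PowerSeries.C (R := k) (PowerSeries.constantCoeff (R := k) u)⁻¹ * u - 1))

/-- `ℓ^(p)(u ∧ v) = (1/2)∑_{1≤i<p} i·(ℓ_{p-i}(u)ℓ_i(v) − ℓ_{p-i}(v)ℓ_i(u))`. -/
noncomputable def ellp (u v : PowerSeries k) : k :=
  (2 : k)⁻¹ * ∑ i ∈ Finset.Ico 1 p,
    (i : k) * (ell p (p - i) u * ell p i v - ell p (p - i) v * ell p i u)

/-- Truncated exponential `ē^z = ∑_{0 ≤ n < p} z^n / n!`. -/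
noncomputable def ee (z : PowerSeries k) : PowerSeries k :=
  ∑ n ∈ Finset.range p, ((n.factorial : k)⁻¹) • z ^ n

/-- The Kontsevich 1½-logarithm `£₁(s) = ∑_{i=1}^{p-1} s^i / i`. -/
noncomputable def kontsevichLog (s : k) : k :=
  ∑ i ∈ Finset.Icc 1 (p - 1), (i : k)⁻¹ * s ^ i

section

variable {p}

theorem natCast_sub_eq_neg_of_charP {R : Type*} [AddGroupWithOne R] [CharP R p] {m : ℕ}
    (hm : m ≤ p) : ((p - m : ℕ) : R) = -m := by
  rw [Nat.cast_sub hm, CharP.cast_eq_zero, zero_sub]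

theorem natCast_ne_zero_of_charP {R : Type*} [AddMonoidWithOne R] [CharP R p] {m : ℕ}
    (hm0 : m ≠ 0) (hm : m < p) : (m : R) ≠ 0 := by
  rw [Ne, CharP.cast_eq_zero_iff R p]
  exact fun h => hm0 (Nat.eq_zero_of_dvd_of_lt h hm)

theorem cast_choose_sub_one_eq_neg_one_pow [CharP k p] {m : ℕ} (hm : m < p) :
    ((p - 1).choose m : k) = (-1) ^ m := by
  induction m with
  | zero => simp
  | succ m ih =>
    have h := congrArg (Nat.cast : ℕ → k) (Nat.choose_succ_right_eq (p - 1) m)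
    rw [show p - 1 - m = p - (m + 1) by omega] at h
    push_cast [natCast_sub_eq_neg_of_charP hm.le, ih (by omega)] at h
    have hm0 : ((m + 1 : ℕ) : k) ≠ 0 := natCast_ne_zero_of_charP (by omega) hm
    apply mul_right_cancel₀ hm0
    push_cast
    linear_combination h

theorem cast_choose_div_self [CharP k p] (hp : p.Prime) {m : ℕ} (hm0 : m ≠ 0) (hm : m < p) :
    ((p.choose m / p : ℕ) : k) = (-1) ^ (m + 1) * (m : k)⁻¹ := by
  obtain ⟨j, rfl⟩ := Nat.exists_eq_add_one_of_ne_zero hm0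
  have hchoose : p.choose (j + 1) / p * (j + 1) = (p - 1).choose j := by
    have h := Nat.add_one_mul_choose_eq (p - 1) j
    rw [Nat.sub_add_cancel hp.one_lt.le] at h
    rw [Nat.div_mul_right_comm (hp.dvd_choose_self hm0 hm), ← h, Nat.mul_div_cancel_left _ hp.pos]
  have h := congrArg (Nat.cast : ℕ → k) hchoose
  push_cast [cast_choose_sub_one_eq_neg_one_pow (k := k) (show j < p by omega)] at h
  have hj : ((j + 1 : ℕ) : k) ≠ 0 := natCast_ne_zero_of_charP hm0 hm
  push_cast at hj ⊢
  rw [eq_mul_inv_iff_mul_eq₀ hj, h]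
  ring

theorem natCast_mul_sum_choose_div_self {R : Type*} [CommRing R] (hp : p.Prime)
    (x y : R) :
    (p : R) * ∑ m ∈ Ico 1 p, ((p.choose m / p : ℕ) : R) * x ^ m * y ^ (p - m) =
      (x + y) ^ p - x ^ p - y ^ p := by
  have hterm : ∀ m ∈ Ico 1 p, (p : R) * (((p.choose m / p : ℕ) : R) * x ^ m * y ^ (p - m)) =
      x ^ m * y ^ (p - m) * p.choose m := by
    intro m hm
    rw [mem_Ico] at hm
    rw [← mul_assoc, ← mul_assoc, ← Nat.cast_mul,
      Nat.mul_div_cancel' (hp.dvd_choose_self (by omega) hm.2)]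
    ring
  rw [mul_sum, sum_congr rfl hterm, add_pow, sum_range_succ, range_eq_Ico,
    sum_eq_sum_Ico_succ_bot hp.pos]
  simp

theorem kontsevichLog_eq_sum_mul_one_sub_pow [CharP k p] (hp : p.Prime) (hp2 : p ≠ 2) (s : k) :
    kontsevichLog p s =
      ∑ m ∈ Ico 1 p, (-1) ^ (m + 1) * (m : k)⁻¹ * s ^ m * (1 - s) ^ (p - m) := by
  set c : ℕ → ℕ := fun m => p.choose m / p
  have hc : ∀ m ∈ Ico 1 p, (c m : k) = (-1) ^ (m + 1) * (m : k)⁻¹ := fun m hm =>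
    cast_choose_div_self hp (by rw [mem_Ico] at hm; omega) (mem_Ico.mp hm).2
  -- `p` times either side is `1 - X ^ p - (1 - X) ^ p`
  have hZ : ∑ m ∈ Ico 1 p, (c m : Polynomial ℤ) * Polynomial.X ^ m * (1 - Polynomial.X) ^ (p - m) =
      -∑ m ∈ Ico 1 p, (c m : Polynomial ℤ) * (-Polynomial.X) ^ m * 1 ^ (p - m) := by
    apply mul_left_cancel₀ (Nat.cast_ne_zero.mpr hp.ne_zero : (p : Polynomial ℤ) ≠ 0)
    rw [mul_neg, natCast_mul_sum_choose_div_self hp, natCast_mul_sum_choose_div_self hp,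
      (hp.odd_of_ne_two hp2).neg_pow]
    ring
  have hk := congrArg (Polynomial.aeval s) hZ
  simp only [map_neg, map_sum, map_mul, map_pow, map_sub, map_one, map_natCast,
    Polynomial.aeval_X] at hk
  calc kontsevichLog p s = ∑ m ∈ Ico 1 p, (m : k)⁻¹ * s ^ m := by
        rw [kontsevichLog, ← Ico_add_one_right_eq_Icc, Nat.sub_add_cancel hp.one_lt.le]
    _ = ∑ m ∈ Ico 1 p, (c m : k) * s ^ m * (1 - s) ^ (p - m) := by
        rw [hk, ← sum_neg_distrib]
        refine sum_congr rfl fun m hm => ?_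
        have hsq : (-1 : k) ^ m * (-1) ^ m = 1 := by rw [← mul_pow]; norm_num
        rw [hc m hm, neg_pow, one_pow]
        linear_combination -(m : k)⁻¹ * s ^ m * hsq
    _ = ∑ m ∈ Ico 1 p, (-1) ^ (m + 1) * (m : k)⁻¹ * s ^ m * (1 - s) ^ (p - m) :=
        sum_congr rfl fun m hm => by rw [hc m hm]

namespace PowerSeries

theorem coeff_mul_derivative {R : Type*} [CommSemiring R] (f g : R⟦X⟧) (n : ℕ) :
    coeff n (f * d⁄dX R g) = ∑ x ∈ antidiagonal (n + 1), (x.2 : R) * coeff x.1 f * coeff x.2 g := by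
  rw [coeff_mul, Nat.sum_antidiagonal_succ']
  simp only [Nat.cast_zero, zero_mul, zero_add, coeff_derivative]
  refine sum_congr rfl fun x _ => ?_
  push_cast
  ring

theorem coeff_sub_one_mul_derivative {R : Type*} [CommRing R] [CharP R p] (hp : p ≠ 0)
    (f g : R⟦X⟧) :
    coeff (p - 1) (f * d⁄dX R g) = ∑ i ∈ Ico 1 p, (i : R) * (coeff (p - i) f * coeff i g) := by
  rw [coeff_mul_derivative, Nat.sub_add_cancel (Nat.one_le_iff_ne_zero.mpr hp),
    ← Nat.sum_antidiagonal_swap, Nat.sum_antidiagonal_eq_sum_range_succ_mk, sum_range_succ,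
    range_eq_Ico, sum_eq_sum_Ico_succ_bot (Nat.pos_of_ne_zero hp)]
  simp [mul_assoc]

theorem coeff_sub_one_derivative {R : Type*} [CommRing R] [CharP R p] (hp : p ≠ 0)
    (h : R⟦X⟧) : coeff (p - 1) (d⁄dX R h) = 0 := by
  rw [coeff_derivative, ← Nat.cast_add_one, Nat.sub_add_cancel (Nat.one_le_iff_ne_zero.mpr hp),
    CharP.cast_eq_zero, mul_zero]

theorem coeff_pow_mul_derivative_of_lt {R : Type*} [CommSemiring R] {σ : R⟦X⟧}
    (hσ : constantCoeff σ = 0) {n j : ℕ} (hj : j < n) : coeff j (σ ^ n * d⁄dX R σ) = 0 :=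
  X_pow_dvd_iff.mp (dvd_mul_of_dvd_left (pow_dvd_pow_of_dvd (X_dvd_iff.mpr hσ) n) _) j hj

theorem coeff_pow_mul_derivative_self {R : Type*} [CommSemiring R] {σ : R⟦X⟧}
    (hσ : constantCoeff σ = 0) (n : ℕ) : coeff n (σ ^ n * d⁄dX R σ) = coeff 1 σ ^ (n + 1) := by
  obtain ⟨τ, rfl⟩ := X_dvd_iff.mpr hσ
  have h := coeff_X_pow_mul (τ ^ n * d⁄dX R (X * τ)) n 0
  rw [zero_add] at h
  rw [mul_pow, mul_assoc, h, coeff_zero_eq_constantCoeff]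
  simp [pow_succ]

theorem coeff_sub_one_pow_mul_derivative [CharP k p] (hp : p ≠ 0) {σ : k⟦X⟧}
    (hσ : constantCoeff σ = 0) (n : ℕ) :
    coeff (p - 1) (σ ^ n * d⁄dX k σ) = if n + 1 = p then coeff 1 σ ^ p else 0 := by
  rcases lt_trichotomy (n + 1) p with hlt | rfl | hgt
  · rw [if_neg hlt.ne]
    have hD := coeff_sub_one_derivative (R := k) hp (σ ^ (n + 1))
    rw [derivative_pow, Nat.add_sub_cancel, ← map_natCast (C (R := k)), mul_assoc,
      coeff_C_mul] at hD
    exact (mul_eq_zero.mp hD).resolve_left (natCast_ne_zero_of_charP (by omega) hlt)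
  · rw [if_pos rfl, Nat.add_sub_cancel, coeff_pow_mul_derivative_self hσ]
  · rw [if_neg hgt.ne', coeff_pow_mul_derivative_of_lt hσ (by omega)]

theorem coeff_sub_one_sum_mul_derivative_sum [CharP k p] (hp : p ≠ 0) {σ : k⟦X⟧}
    (hσ : constantCoeff σ = 0) (a b : ℕ → k) :
    coeff (p - 1) ((∑ m ∈ Ico 1 p, C (a m) * σ ^ m) * d⁄dX k (∑ n ∈ Ico 1 p, C (b n) * σ ^ n)) =
      coeff 1 σ ^ p * ∑ m ∈ Ico 1 p, a m * b (p - m) * (p - m : ℕ) := by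
  have hterm : ∀ m ∈ Ico 1 p, ∀ n ∈ Ico 1 p,
      coeff (p - 1) (C (a m) * σ ^ m * d⁄dX k (C (b n) * σ ^ n)) =
        if n = p - m then coeff 1 σ ^ p * (a m * b n * n) else 0 := by
    intro m hm n hn
    rw [mem_Ico] at hm hn
    have hprod : C (a m) * σ ^ m * d⁄dX k (C (b n) * σ ^ n) =
        C (a m * b n * n) * (σ ^ (m + n - 1) * d⁄dX k σ) := by
      rw [Derivation.leibniz, derivative_C, smul_zero, add_zero, smul_eq_mul, derivative_pow,
        map_mul, map_mul, map_natCast, show m + n - 1 = m + (n - 1) by omega, pow_add]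
      ring
    rw [hprod, coeff_C_mul, coeff_sub_one_pow_mul_derivative hp hσ]
    by_cases h : n = p - m
    · rw [if_pos (by omega), if_pos h]
      ring
    · rw [if_neg (by omega), if_neg h, mul_zero]
  rw [map_sum, sum_mul_sum, map_sum, mul_sum]
  refine sum_congr rfl fun m hm => ?_
  rw [map_sum, sum_congr rfl (hterm m hm), sum_ite_eq', if_pos]
  rw [mem_Ico] at hm ⊢
  omega

end PowerSeries

theorem tlog_C_mul (a : k) (σ : k⟦X⟧) :
    tlog p (C a * σ) = ∑ n ∈ Ico 1 p, C ((-1) ^ (n + 1) * (n : k)⁻¹ * a ^ n) * σ ^ n :=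
  sum_congr rfl fun n _ => by rw [smul_eq_C_mul, mul_pow, ← map_pow, ← mul_assoc, ← map_mul]

theorem coeff_sub_one_tlog_mul_derivative_tlog [CharP k p] (hp : Odd p) {σ : k⟦X⟧}
    (hσ : constantCoeff σ = 0) (a b : k) :
    coeff (p - 1) (tlog p (C a * σ) * d⁄dX k (tlog p (C b * σ))) =
      -(coeff 1 σ ^ p * ∑ m ∈ Ico 1 p, (m : k)⁻¹ * a ^ m * b ^ (p - m)) := by
  rw [tlog_C_mul, tlog_C_mul, coeff_sub_one_sum_mul_derivative_sum hp.pos.ne' hσ, ← mul_neg,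
    ← sum_neg_distrib]
  refine congrArg _ (sum_congr rfl fun m hm => ?_)
  rw [mem_Ico] at hm
  have hpm : ((p - m : ℕ) : k) ≠ 0 := natCast_ne_zero_of_charP (by omega) (by omega)
  have hsign : (-1 : k) ^ (m + 1) * (-1) ^ (p - m + 1) = -1 := by
    rw [← pow_add, show m + 1 + (p - m + 1) = p + 2 by omega, (hp.add_even even_two).neg_one_pow]
  field_simp
  linear_combination (m : k)⁻¹ * a ^ m * b ^ (p - m) * hsign

theorem ellp_eq_coeff_sub_one_mul_derivative [CharP k p] (hp : p ≠ 0) (h2 : (2 : k) ≠ 0)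
    (u v : k⟦X⟧) :
    ellp p u v = coeff (p - 1) (tlog p (C (constantCoeff u)⁻¹ * u - 1) *
      d⁄dX k (tlog p (C (constantCoeff v)⁻¹ * v - 1))) := by
  set F := tlog p (C (constantCoeff u)⁻¹ * u - 1)
  set G := tlog p (C (constantCoeff v)⁻¹ * v - 1)
  have hswap : ∑ i ∈ Ico 1 p, (i : k) * (coeff (p - i) G * coeff i F) =
      -∑ i ∈ Ico 1 p, (i : k) * (coeff (p - i) F * coeff i G) := by
    have h := sum_Ico_reflect (fun i => -((i : k) * (coeff (p - i) F * coeff i G))) 1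
      (Nat.le_succ p)
    rw [Nat.add_sub_cancel_left, Nat.add_sub_cancel] at h
    rw [← sum_neg_distrib, ← h]
    refine sum_congr rfl fun i hi => ?_
    rw [mem_Ico] at hi
    rw [natCast_sub_eq_neg_of_charP hi.2.le, Nat.sub_sub_self hi.2.le]
    ring
  have hu : ∀ i, ell p i u = coeff i F := fun _ => rfl
  have hv : ∀ i, ell p i v = coeff i G := fun _ => rfl
  simp only [ellp, hu, hv, mul_sub, sum_sub_distrib]
  rw [hswap, coeff_sub_one_mul_derivative hp]
  field_simp
  ring

theorem C_inv_mul_sub_one {c : k} (hc : c ≠ 0) (u : k⟦X⟧) :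
    C c⁻¹ * u - 1 = C c⁻¹ * (u - C c) := by
  rw [mul_sub, ← map_mul, inv_mul_cancel₀ hc, map_one]

end

/-- `ℓi₂^(p) = ℓ^(p) ∘ δ`: for any lift `s̃ ∈ k[t]/(t^p)` of `s + αt` with
constant term `s ∉ {0,1}` and `t`-coefficient `α`, one has
`ℓ^(p)((1 − s̃) ∧ s̃) = (α^p/(s^p(1-s)^p))·£₁(s)`; in particular the value is
independent of the choice of lift beyond the `t¹`-coefficient. -/
theorem ellp_delta_eq_li2p (hp : p.Prime) (hp5 : 5 ≤ p) [CharP k p]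
    (s α : k) (hs0 : s ≠ 0) (hs1 : s ≠ 1) (st : PowerSeries k)
    (h0 : PowerSeries.constantCoeff (R := k) st = s) (h1 : PowerSeries.coeff (R := k) 1 st = α) :
    ellp p (1 - st) st = α ^ p / (s ^ p * (1 - s) ^ p) * kontsevichLog p s := by
  have hs1' : 1 - s ≠ 0 := sub_ne_zero.mpr hs1.symm
  have h2 : (2 : k) ≠ 0 := by
    exact_mod_cast natCast_ne_zero_of_charP (p := p) two_ne_zero (by omega)
  set σ := st - C s
  have hσ0 : constantCoeff σ = 0 := by simp [σ, h0]
  have hσ1 : coeff 1 σ = α := by simp [σ, h1]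
  have hu : C (constantCoeff (1 - st))⁻¹ * (1 - st) - 1 = C (-(1 - s)⁻¹) * σ := by
    rw [map_sub, map_one, h0, C_inv_mul_sub_one hs1', map_neg, map_sub, map_one]
    ring
  have hv : C (constantCoeff st)⁻¹ * st - 1 = C s⁻¹ * σ := by
    rw [h0, C_inv_mul_sub_one hs0]
  rw [ellp_eq_coeff_sub_one_mul_derivative hp.ne_zero h2, hu, hv,
    coeff_sub_one_tlog_mul_derivative_tlog (hp.odd_of_ne_two (by omega)) hσ0, hσ1,
    kontsevichLog_eq_sum_mul_one_sub_pow hp (by omega), ← mul_neg, ← sum_neg_distrib,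
    mul_sum, mul_sum]
  refine sum_congr rfl fun m hm => ?_
  obtain ⟨d, hd⟩ : ∃ d, p = m + d := Nat.exists_eq_add_of_le (mem_Ico.mp hm).2.le
  rw [hd, Nat.add_sub_cancel_left, neg_pow, inv_pow, inv_pow, pow_add, pow_add, pow_add]
  field_simp
  ring
end

section
/- Chow–Kontsevich dilogarithm on ℙ¹: Let k be a field of characteristic p ≥ 5, k₂ = k[t]/(t²), and consider the triple of functions (1−z, z, z − s̃) on ℙ¹_{k₂} with coordinate z, where s̃ = s + a·s(1−s)·t, s ∈ k∖{0,1}, a ∈ k. Using the global lift to k[[t]] given by the same formulas, the sum over closed points c ∈ |ℙ¹| of ℓ^(p)(res_c((1−z) ∧ z ∧ (z − s̃))) equals a^p · £₁(s). Concretely: the residues at 0, 1, ∞ vanish, the residue at z = s̃ equals (1−s̃) ∧ s̃ ∈ Λ²(k[t]/(t^p))^×, and ℓ^(p)((1−s̃) ∧ s̃) = a^p·£₁(s) where £₁(s) = ∑_{1≤i≤p-1} s^i/i. -/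
open Finset PowerSeries

variable (p : ℕ) {k : Type*} [Field k]

/-!
A unit `c·(1 + α t)` has `ℓ_i = (-1)^(i+1) α^i / i`, so in characteristic `p` the pairing `ℓ^(p)`
of two such units is the degree-`p` form `F(α, β) = ∑ α^(p-i) β^i / i`. Since
`1/i ≡ (-1)^(i+1) (p choose i)/p (mod p)`, `F(x, y)` is, up to sign, the Witt carry
`((x - y)^p - x^p - (-y)^p)/p`. For `s̃` we have `α = -a s`, `β = a (1 - s)`, so the pairing is
`a^p F(-s, 1 - s)`, and both `F(-s, 1 - s)` and `F(1, s) = £₁(s)` equal `(1 - s^p - (1 - s)^p)/p`,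
an identity over `ℤ[X]`.
-/

/-- `((x + y)^p - x^p - y^p)/p`; the `ℕ`-division is exact since `p ∣ p.choose i` for
`0 < i < p`. -/
def wittCarry {R : Type*} [CommRing R] (x y : R) : R :=
  ∑ i ∈ Ioo 0 p, x ^ i * y ^ (p - i) * ((p.choose i / p : ℕ) : R)

lemma natCast_mul_wittCarry {R : Type*} [CommRing R] (hp : p.Prime) (x y : R) :
    (p : R) * wittCarry p x y = (x + y) ^ p - x ^ p - y ^ p := by
  rw [add_pow_prime_eq' hp, wittCarry]
  ring

lemma map_wittCarry {R S : Type*} [CommRing R] [CommRing S] (f : R →+* S) (x y : R) :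
    f (wittCarry p x y) = wittCarry p (f x) (f y) := by
  simp [wittCarry, map_sum]

lemma wittCarry_sub_one_neg {R : Type*} [CommRing R] (hp : p.Prime) (hp2 : p ≠ 2) (x : R) :
    wittCarry p (x - 1) (-x) = wittCarry p (-x) 1 := by
  have hodd : Odd p := hp.odd_of_ne_two hp2
  -- `p` can be cancelled in the universal case `ℤ[X]`
  have hpoly : wittCarry p (Polynomial.X - 1 : Polynomial ℤ) (-Polynomial.X) =
      wittCarry p (-Polynomial.X) 1 := by
    refine mul_left_cancel₀ (Nat.cast_ne_zero.2 hp.ne_zero : (p : Polynomial ℤ) ≠ 0) ?_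
    rw [natCast_mul_wittCarry p hp, natCast_mul_wittCarry p hp,
      show (Polynomial.X - 1 + -Polynomial.X : Polynomial ℤ) = -1 by ring,
      show (Polynomial.X - 1 : Polynomial ℤ) = -(1 - Polynomial.X) by ring,
      hodd.neg_one_pow, hodd.neg_pow, neg_add_eq_sub, one_pow]
    ring
  simpa [map_wittCarry] using congrArg (Polynomial.eval₂RingHom (Int.castRingHom R) x) hpoly

lemma natCast_choose_pred_eq_neg_one_pow (hp : p.Prime) [CharP k p] {j : ℕ} (hj : j < p) :
    ((p - 1).choose j : k) = (-1) ^ j := by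
  induction j with
  | zero => simp
  | succ j ih =>
    have hpascal : p.choose (j + 1) = (p - 1).choose j + (p - 1).choose (j + 1) := by
      rw [← Nat.choose_succ_succ', Nat.sub_add_cancel hp.one_le]
    have hvanish : (p.choose (j + 1) : k) = 0 :=
      (CharP.cast_eq_zero_iff k p _).2 (hp.dvd_choose_self j.succ_ne_zero hj)
    rw [hpascal, Nat.cast_add, ih (by omega)] at hvanish
    rw [pow_succ]
    linear_combination hvanish

lemma natCast_ne_zero_of_lt [CharP k p] {i : ℕ} (h0 : i ≠ 0) (hi : i < p) :
    (i : k) ≠ 0 := by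
  rw [Ne, CharP.cast_eq_zero_iff k p]
  exact fun h => absurd (Nat.le_of_dvd (Nat.pos_of_ne_zero h0) h) (not_le.2 hi)

lemma inv_natCast_eq_neg_one_pow_mul_choose_div (hp : p.Prime) [CharP k p] {i : ℕ} (h0 : i ≠ 0)
    (hi : i < p) : (i : k)⁻¹ = (-1) ^ (i + 1) * ((p.choose i / p : ℕ) : k) := by
  obtain ⟨m, hm⟩ := hp.dvd_choose_self h0 hi
  have hnat : (p - 1).choose (i - 1) = i * m := by
    have h := Nat.add_one_mul_choose_eq (p - 1) (i - 1)
    rw [Nat.sub_add_cancel hp.one_le, Nat.sub_add_cancel (Nat.one_le_iff_ne_zero.2 h0), hm,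
      mul_assoc] at h
    linarith [Nat.eq_of_mul_eq_mul_left hp.pos h]
  have hkey : (i : k) * m = (-1) ^ (i - 1) := by
    rw [← Nat.cast_mul, ← hnat, natCast_choose_pred_eq_neg_one_pow p hp (by omega)]
  have hsign : (-1 : k) ^ (i + 1) * (-1) ^ (i - 1) = 1 := by
    rw [← pow_add]
    exact Even.neg_one_pow ⟨i, by omega⟩
  rw [hm, Nat.mul_div_cancel_left m hp.pos]
  refine inv_eq_of_mul_eq_one_left ?_
  linear_combination (-1 : k) ^ (i + 1) * hkey + hsign

/-- Homogenization of `£₁`: `kontsevichLog p s = kontsevichLogHom p 1 s`. -/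
noncomputable def kontsevichLogHom (x y : k) : k :=
  ∑ i ∈ Ico 1 p, (i : k)⁻¹ * x ^ (p - i) * y ^ i

lemma kontsevichLog_eq_kontsevichLogHom_one (s : k) :
    kontsevichLog p s = kontsevichLogHom p 1 s := by
  have hIcc : Icc 1 (p - 1) = Ico 1 p := by ext; simp only [mem_Icc, mem_Ico]; omega
  simp [kontsevichLog, kontsevichLogHom, hIcc]

lemma kontsevichLogHom_mul_mul (a x y : k) :
    kontsevichLogHom p (a * x) (a * y) = a ^ p * kontsevichLogHom p x y := by
  rw [kontsevichLogHom, kontsevichLogHom, mul_sum]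
  refine sum_congr rfl fun i hi => ?_
  have hap : a ^ p = a ^ (p - i) * a ^ i := by
    rw [← pow_add, Nat.sub_add_cancel (mem_Ico.1 hi).2.le]
  rw [mul_pow, mul_pow, hap]
  ring

lemma kontsevichLogHom_swap [CharP k p] (x y : k) :
    kontsevichLogHom p y x = -kontsevichLogHom p x y := by
  rw [kontsevichLogHom, kontsevichLogHom, ← sum_neg_distrib]
  have hmaps : ∀ i ∈ Ico 1 p, p - i ∈ Ico 1 p := by intro i; simp only [mem_Ico]; omega
  have hinv : ∀ i ∈ Ico 1 p, p - (p - i) = i := by intro i; simp only [mem_Ico]; omega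
  refine sum_nbij' (p - ·) (p - ·) hmaps hmaps hinv hinv fun i hi => ?_
  have hi := (mem_Ico.1 hi).2.le
  rw [Nat.sub_sub_self hi, Nat.cast_sub hi, CharP.cast_eq_zero k p, zero_sub, inv_neg]
  ring

lemma kontsevichLogHom_eq_neg_wittCarry (hp : p.Prime) [CharP k p] (x y : k) :
    kontsevichLogHom p x y = -wittCarry p (-y) x := by
  rw [kontsevichLogHom, wittCarry, ← Ico_add_one_left_eq_Ioo, zero_add, ← sum_neg_distrib]
  refine sum_congr rfl fun i hi => ?_
  rw [mem_Ico] at hi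
  rw [inv_natCast_eq_neg_one_pow_mul_choose_div p hp (by omega) hi.2, neg_pow]
  ring

lemma kontsevichLogHom_neg_one_sub (hp : p.Prime) (hp2 : p ≠ 2) [CharP k p] (s : k) :
    kontsevichLogHom p (-s) (1 - s) = kontsevichLogHom p 1 s := by
  rw [kontsevichLogHom_eq_neg_wittCarry p hp, kontsevichLogHom_eq_neg_wittCarry p hp, neg_sub,
    wittCarry_sub_one_neg p hp hp2]

lemma coeff_tlog_C_mul_X (α : k) {i : ℕ} (h0 : i ≠ 0) (hi : i < p) :
    coeff i (tlog p (C α * X)) = (-1) ^ (i + 1) * (i : k)⁻¹ * α ^ i := by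
  rw [tlog, map_sum, sum_eq_single_of_mem i (mem_Ico.2 ⟨Nat.one_le_iff_ne_zero.2 h0, hi⟩)]
  · simp [mul_pow, ← map_pow, coeff_X_pow, mul_comm]
  · intro n _ hn
    simp [mul_pow, ← map_pow, coeff_X_pow, Ne.symm hn]

lemma ell_C_add_C_mul_X {c : k} (hc : c ≠ 0) (α : k) {i : ℕ} (h0 : i ≠ 0) (hi : i < p) :
    ell p i (C c + C (c * α) * X) = (-1) ^ (i + 1) * (i : k)⁻¹ * α ^ i := by
  have hnormal : C (constantCoeff (C c + C (c * α) * X))⁻¹ * (C c + C (c * α) * X) - 1 =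
      C α * X := by
    simp only [map_add, constantCoeff_C, map_mul, constantCoeff_X, mul_zero, add_zero]
    have hcinv : C c⁻¹ * C c = (1 : PowerSeries k) := by
      rw [← map_mul, inv_mul_cancel₀ hc, map_one]
    linear_combination (1 + C α * X) * hcinv
  rw [ell, hnormal, coeff_tlog_C_mul_X p α h0 hi]

lemma ellp_C_add_C_mul_X (hp : p.Prime) (hp2 : p ≠ 2) [CharP k p] {c d : k} (hc : c ≠ 0)
    (hd : d ≠ 0) (α β : k) :
    ellp p (C c + C (c * α) * X) (C d + C (d * β) * X) = kontsevichLogHom p α β := by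
  have h2 : (2 : k) ≠ 0 := by
    simpa using
      natCast_ne_zero_of_lt p (k := k) two_ne_zero (lt_of_le_of_ne hp.two_le (Ne.symm hp2))
  have hpair : ∀ x y : k, ∀ i ∈ Ico 1 p,
      (i : k) * ((-1) ^ (p - i + 1) * ((p - i : ℕ) : k)⁻¹ * x ^ (p - i) *
        ((-1) ^ (i + 1) * (i : k)⁻¹ * y ^ i)) = (i : k)⁻¹ * x ^ (p - i) * y ^ i := by
    intro x y i hi
    rw [mem_Ico] at hi
    have hi0 : (i : k) ≠ 0 := natCast_ne_zero_of_lt p (by omega) hi.2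
    have hsign : (-1 : k) ^ (p - i + 1) * (-1) ^ (i + 1) = -1 := by
      rw [← pow_add, show p - i + 1 + (i + 1) = p + 2 by omega]
      exact (hp.odd_of_ne_two hp2).add_even even_two |>.neg_one_pow
    rw [Nat.cast_sub hi.2.le, CharP.cast_eq_zero k p, zero_sub, inv_neg]
    field_simp
    linear_combination (-(x ^ (p - i) * y ^ i)) * hsign
  have hterm : ∀ i ∈ Ico 1 p, (i : k) *
      (ell p (p - i) (C c + C (c * α) * X) * ell p i (C d + C (d * β) * X) -
        ell p (p - i) (C d + C (d * β) * X) * ell p i (C c + C (c * α) * X)) =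
      (i : k)⁻¹ * α ^ (p - i) * β ^ i - (i : k)⁻¹ * β ^ (p - i) * α ^ i := by
    intro i hi
    have hi' := mem_Ico.1 hi
    rw [ell_C_add_C_mul_X p hc α (i := p - i) (by omega) (by omega),
      ell_C_add_C_mul_X p hc α (i := i) (by omega) hi'.2,
      ell_C_add_C_mul_X p hd β (i := p - i) (by omega) (by omega),
      ell_C_add_C_mul_X p hd β (i := i) (by omega) hi'.2, mul_sub, hpair α β i hi, hpair β α i hi]
  rw [ellp, sum_congr rfl hterm, sum_sub_distrib]
  change 2⁻¹ * (kontsevichLogHom p α β - kontsevichLogHom p β α) = _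
  rw [kontsevichLogHom_swap p α β]
  field_simp
  ring

/-- Chow–Kontsevich dilogarithm on `ℙ¹`: for the triple `(1−z, z, z−s̃)` with
`s̃ = s + a·s(1−s)·t`, the residue of `(1−z) ∧ z ∧ (z−s̃)` at `z = s̃` is
`(1−s̃) ∧ s̃`, and its `ℓ^(p)`-value — the total contribution of the regulator,
the residues at `0, 1, ∞` vanishing — is `a^p·£₁(s)`. -/
theorem chow_kontsevich_on_P1 (hp : p.Prime) (hp5 : 5 ≤ p) [CharP k p]
    (s a : k) (hs0 : s ≠ 0) (hs1 : s ≠ 1) :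
    ellp p (1 - (PowerSeries.C (R := k) s + PowerSeries.C (R := k) (a * s * (1 - s)) * X))
        (PowerSeries.C (R := k) s + PowerSeries.C (R := k) (a * s * (1 - s)) * X) =
      a ^ p * kontsevichLog p s := by
  have hp2 : p ≠ 2 := by omega
  have hu : 1 - (C s + C (a * s * (1 - s)) * X) = C (1 - s) + C ((1 - s) * (a * -s)) * X := by
    rw [show (1 - s) * (a * -s) = -(a * s * (1 - s)) by ring, map_sub, map_neg, map_one]
    ring
  rw [hu, show a * s * (1 - s) = s * (a * (1 - s)) by ring,
    ellp_C_add_C_mul_X p hp hp2 (sub_ne_zero.2 hs1.symm) hs0, kontsevichLogHom_mul_mul,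
    kontsevichLogHom_neg_one_sub p hp hp2, kontsevichLog_eq_kontsevichLogHom_one]
end
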